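/- For all integers a, b, c ≥ 5 and every d with 1 ≤ d ≤ 2c−3, in the graph FCS_{a,b,c} the vertices u_{1,2} and r_{1,2} satisfy d(u_{1,2}, p_{1,1}) = d(r_{1,2}, p_{1,1}) and d(u_{1,2}, t_{1,d}) = d(r_{1,2}, t_{1,d}); consequently the set {p_{1,1}, t_{1,d}} is not a metric generator for FCS_{a,b,c}. -/

import Mathlib

/-- Vertex labels of the zigzag-edge coronoid fused with starphene `FCS_{a,b,c}`. -/
inductive FCSV : Type
  | p1 (d : ℕ) | p2 (d : ℕ) | p3 (d : ℕ)
  | q1 (d : ℕ) | q2 (d : ℕ) | q3 (d : ℕ)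
  | r1 (d : ℕ) | r2 (d : ℕ) | r3 (d : ℕ)
  | s1 (d : ℕ) | s2 (d : ℕ) | s3 (d : ℕ)
  | t1 (d : ℕ) | t2 (d : ℕ) | t3 (d : ℕ)
  | u1 (d : ℕ) | u2 (d : ℕ) | u3 (d : ℕ)

/-- Membership in the vertex set of `FCS_{a,b,c}`. -/
def FCSvalid (a b c : ℕ) : FCSV → Prop
  | .p1 d => 1 ≤ d ∧ d ≤ 2*a-1
  | .p2 d => 1 ≤ d ∧ d ≤ 2*a-1
  | .p3 d => 1 ≤ d ∧ d ≤ 2*a-5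
  | .q1 d => 1 ≤ d ∧ d ≤ 2*c-1
  | .q2 d => 1 ≤ d ∧ d ≤ 2*c-1
  | .q3 d => 1 ≤ d ∧ d ≤ 2*c-5
  | .r1 d => 1 ≤ d ∧ d ≤ 2*b-1
  | .r2 d => 1 ≤ d ∧ d ≤ 2*b-1
  | .r3 d => 1 ≤ d ∧ d ≤ 2*b-5
  | .s1 d => 1 ≤ d ∧ d ≤ 2*a-3
  | .s2 d => 1 ≤ d ∧ d ≤ 2*a-3
  | .s3 d => 1 ≤ d ∧ d ≤ 2*a-5
  | .t1 d => 1 ≤ d ∧ d ≤ 2*c-3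
  | .t2 d => 1 ≤ d ∧ d ≤ 2*c-3
  | .t3 d => 1 ≤ d ∧ d ≤ 2*c-5
  | .u1 d => 1 ≤ d ∧ d ≤ 2*b-3
  | .u2 d => 1 ≤ d ∧ d ≤ 2*b-3
  | .u3 d => 1 ≤ d ∧ d ≤ 2*b-5

/-- The vertex set of `FCS_{a,b,c}` as a type. -/
abbrev FCSVert (a b c : ℕ) := {v : FCSV // FCSvalid a b c v}

/-- The (oriented) edge list of `FCS_{a,b,c}`. -/
def FCSadj (a b c : ℕ) : FCSV → FCSV → Prop := fun x y =>
  -- path edges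
  (∃ d, 1 ≤ d ∧ d ≤ 2*a-2 ∧ ((x, y) = (.p1 d, .p1 (d+1)) ∨ (x, y) = (.p2 d, .p2 (d+1)))) ∨
  (∃ d, 1 ≤ d ∧ d ≤ 2*c-2 ∧ ((x, y) = (.q1 d, .q1 (d+1)) ∨ (x, y) = (.q2 d, .q2 (d+1)))) ∨
  (∃ d, 1 ≤ d ∧ d ≤ 2*b-2 ∧ ((x, y) = (.r1 d, .r1 (d+1)) ∨ (x, y) = (.r2 d, .r2 (d+1)))) ∨
  (∃ d, 1 ≤ d ∧ d ≤ 2*a-4 ∧ ((x, y) = (.s1 d, .s1 (d+1)) ∨ (x, y) = (.s2 d, .s2 (d+1)))) ∨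
  (∃ d, 1 ≤ d ∧ d ≤ 2*b-4 ∧ ((x, y) = (.u1 d, .u1 (d+1)) ∨ (x, y) = (.t2 d, .t2 (d+1)))) ∨
  (∃ d, 1 ≤ d ∧ d ≤ 2*c-4 ∧ ((x, y) = (.t1 d, .t1 (d+1)) ∨ (x, y) = (.u2 d, .u2 (d+1)))) ∨
  (∃ d, 1 ≤ d ∧ d ≤ 2*a-6 ∧ ((x, y) = (.p3 d, .p3 (d+1)) ∨ (x, y) = (.s3 d, .s3 (d+1)))) ∨
  (∃ d, 1 ≤ d ∧ d ≤ 2*c-6 ∧ ((x, y) = (.q3 d, .q3 (d+1)) ∨ (x, y) = (.t3 d, .t3 (d+1)))) ∨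
  (∃ d, 1 ≤ d ∧ d ≤ 2*b-6 ∧ ((x, y) = (.r3 d, .r3 (d+1)) ∨ (x, y) = (.u3 d, .u3 (d+1)))) ∨
  -- rung edges
  (∃ d, 1 ≤ d ∧ d ≤ a-1 ∧ ((x, y) = (.p1 (2*d), .s1 (2*d-1)) ∨ (x, y) = (.p2 (2*d), .s2 (2*d-1)))) ∨
  (∃ d, 1 ≤ d ∧ d ≤ c-1 ∧ ((x, y) = (.q1 (2*d), .t1 (2*d-1)) ∨ (x, y) = (.q2 (2*d), .u2 (2*d-1)))) ∨
  (∃ d, 1 ≤ d ∧ d ≤ b-1 ∧ ((x, y) = (.r1 (2*d), .u1 (2*d-1)) ∨ (x, y) = (.r2 (2*d), .t2 (2*d-1)))) ∨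
  (∃ d, 1 ≤ d ∧ d ≤ a-2 ∧ (x, y) = (.p3 (2*d-1), .s3 (2*d-1))) ∨
  (∃ d, 1 ≤ d ∧ d ≤ c-2 ∧ (x, y) = (.q3 (2*d-1), .t3 (2*d-1))) ∨
  (∃ d, 1 ≤ d ∧ d ≤ b-2 ∧ (x, y) = (.r3 (2*d-1), .u3 (2*d-1))) ∨
  -- junction edges
  (x, y) = (.p3 1, .r3 1) ∨ (x, y) = (.q3 1, .u3 1) ∨ (x, y) = (.s3 1, .t3 1) ∨
  (x, y) = (.p3 (2*a-5), .t2 (2*c-4)) ∨ (x, y) = (.s3 (2*a-5), .u2 2) ∨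
  (x, y) = (.q3 (2*c-5), .u1 (2*b-4)) ∨ (x, y) = (.t3 (2*c-5), .s2 (2*a-4)) ∨
  (x, y) = (.r3 (2*b-5), .s1 (2*a-4)) ∨ (x, y) = (.u3 (2*b-5), .t1 2) ∨
  (x, y) = (.p1 1, .q2 1) ∨ (x, y) = (.s1 1, .u2 1) ∨
  (x, y) = (.p1 (2*a-1), .q1 1) ∨ (x, y) = (.s1 (2*a-3), .t1 1) ∨
  (x, y) = (.q1 (2*c-1), .r1 1) ∨ (x, y) = (.t1 (2*c-3), .u1 1) ∨
  (x, y) = (.r1 (2*b-1), .p2 (2*a-1)) ∨ (x, y) = (.u1 (2*b-3), .s2 (2*a-3)) ∨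
  (x, y) = (.p2 1, .r2 (2*b-1)) ∨ (x, y) = (.s2 1, .t2 (2*b-3)) ∨
  (x, y) = (.r2 1, .q2 (2*c-1)) ∨ (x, y) = (.t2 1, .u2 (2*c-3))

/-- The zigzag-edge coronoid fused with starphene `FCS_{a,b,c}`. -/
def FCS (a b c : ℕ) : SimpleGraph (FCSVert a b c) :=
  SimpleGraph.fromRel (fun x y => FCSadj a b c x.1 y.1)

/-- `W` is a metric generator (resolving set) for `G`. -/
def IsResolving {α : Type*} (G : SimpleGraph α) (W : Set α) : Prop :=
  ∀ x y : α, x ≠ y → ∃ w ∈ W, G.dist w x ≠ G.dist w y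

/-- The metric dimension of `G`. -/
noncomputable def metricDim {α : Type*} (G : SimpleGraph α) : ℕ :=
  sInf {n | ∃ W : Set α, W.Finite ∧ W.ncard = n ∧ IsResolving G W}

/-- Distance from a vertex to an edge: minimum of the distances to its endpoints. -/
noncomputable def edgeDist {α : Type*} (G : SimpleGraph α) (x : α) (e : Sym2 α) : ℕ :=
  Sym2.lift ⟨fun y z => min (G.dist x y) (G.dist x z), fun _ _ => min_comm _ _⟩ e

/-- `W` is an edge metric generator for `G`. -/
def IsEdgeResolving {α : Type*} (G : SimpleGraph α) (W : Set α) : Prop :=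
  ∀ e ∈ G.edgeSet, ∀ f ∈ G.edgeSet, e ≠ f → ∃ w ∈ W, edgeDist G w e ≠ edgeDist G w f

/-- The edge metric dimension of `G`. -/
noncomputable def edgeMetricDim {α : Type*} (G : SimpleGraph α) : ℕ :=
  sInf {n | ∃ W : Set α, W.Finite ∧ W.ncard = n ∧ IsEdgeResolving G W}

/-!
The walk `p₁,₁ p₁,₂ p₁,₃ p₁,₄ s₁,₃ s₁,₄ … s₁,₂ₐ₋₃ t₁,₁ t₁,₂ … t₁,₂c₋₃ u₁,₁` (`FCS.geodesicLabel`)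
passes through every `t₁,d`, and its last vertex `u₁,₁` is adjacent to both `u₁,₂` and `r₁,₂`.
The function `FCS.potential` changes by at most one along every edge, increases by exactly one
at each step of this walk, and equals `2a + 2c - 3` at both `u₁,₂` and `r₁,₂`. So the walk,
extended by either last edge, is a shortest path, and every vertex on it (`p₁,₁` and `t₁,d`
among them) is as far from `u₁,₂` as from `r₁,₂`.
-/

namespace SimpleGraph

variable {V : Type*} {G : SimpleGraph V}

theorem Walk.sub_le_length {f : V → ℤ} (hf : ∀ u v, G.Adj u v → f v ≤ f u + 1) {x y : V}
    (w : G.Walk x y) : f y - f x ≤ w.length := by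
  induction w with
  | nil => simp
  | cons h _ ih =>
    have := hf _ _ h
    rw [Walk.length_cons]
    push_cast
    omega

theorem edist_le_of_adj_succ (v : ℕ → V) {m n : ℕ} (hmn : m ≤ n)
    (h : ∀ k, m ≤ k → k < n → G.Adj (v k) (v (k + 1))) : G.edist (v m) (v n) ≤ (n - m : ℕ) := by
  induction n, hmn using Nat.le_induction with
  | base => simp
  | succ n hmn ih =>
    calc G.edist (v m) (v (n + 1)) ≤ G.edist (v m) (v n) + G.edist (v n) (v (n + 1)) :=
          G.edist_triangle
      _ ≤ (n - m : ℕ) + 1 := by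
          gcongr
          · exact ih fun k hk hkn => h k hk (by omega)
          · exact (edist_eq_one_iff_adj.mpr (h n hmn (by omega))).le
      _ = (n + 1 - m : ℕ) := by rw [Nat.sub_add_comm hmn]; push_cast; rfl

theorem dist_eq_of_edist_le_of_le_sub {f : V → ℤ} (hf : ∀ u v, G.Adj u v → f v ≤ f u + 1)
    {x y : V} {n : ℕ} (hle : G.edist x y ≤ n) (hge : n ≤ f y - f x) : G.dist x y = n := by
  have hr : G.Reachable x y := reachable_of_edist_ne_top (ne_top_of_le_ne_top (by simp) hle)
  obtain ⟨w, hw⟩ := hr.exists_walk_length_eq_dist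
  have hlow := w.sub_le_length hf
  have hup : G.dist x y ≤ n := by
    rw [← ENat.natCast_le_natCast, hr.coe_dist_eq_edist]
    exact hle
  omega

end SimpleGraph

theorem not_isResolving_of_forall_dist_eq {α : Type*} {G : SimpleGraph α} {W : Set α} {x y : α}
    (hxy : x ≠ y) (h : ∀ w ∈ W, G.dist x w = G.dist y w) : ¬ IsResolving G W := fun hW => by
  obtain ⟨w, hw, hne⟩ := hW x y hxy
  rw [SimpleGraph.dist_comm, h w hw, SimpleGraph.dist_comm] at hne
  exact hne rfl

namespace FCS

variable {a b c : ℕ}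

theorem adj_iff {u v : FCSVert a b c} :
    (FCS a b c).Adj u v ↔ u.1 ≠ v.1 ∧ (FCSadj a b c u.1 v.1 ∨ FCSadj a b c v.1 u.1) := by
  rw [FCS, SimpleGraph.fromRel_adj, ne_eq, Subtype.ext_iff]

/-- Up to truncation at `0`, `2a + 2c - 3 - potential a b c v` is, on each vertex class, an affine
or tent-shaped lower bound for the distance from `v` to `{u₁,₂, r₁,₂}`; the same formulas serve
`b < c`, `b = c` and `b > c`. -/
def potential (a b c : ℕ) (v : FCSV) : ℤ :=
  max 0 <| match v with
  | .p1 e => e - 1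
  | .s1 e => e + 1
  | .t1 e | .q1 e => 2*a - 2 + e
  | .u1 e | .r1 e => 2*a + 2*c - 3 - |(e:ℤ) - 2|
  | .s2 e => 2*c - 2*b + 4 + e
  | .p2 e => 2*c - 2*b + 2 + e
  -- for `c > b`, the `t₂,e` with `e > 2b - 3` lie off the `t₂`-path and meet the rest of the
  -- graph at most through the edge to `p₃,₂ₐ₋₅`
  | .t2 e => if e ≤ 2*b - 3 then max (2*c - 4*b + 7 + e) (1 - |(e:ℤ) - (2*c - 4)|) else 2
  | .r2 e => 2*c - 4*b + 5 + e
  | .q2 e => e - 4*b + 6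
  | .u2 _ => 1
  | .q3 e => 2*a - 2*b + 7 + e
  | .t3 e => 2*a - 2*b + 6 + e
  | .s3 e => max (2*a - 2*b + 7 - e) (e - 2*a + 6)
  | .p3 e => max (2*a - 2*b + 8 - e) (e - 2*a + 7)
  | .r3 e => max (2*a - 2*b + 3 + e) (2*a - 2*b + 7 - e)
  | .u3 e => max (2*a - 2*b + 4 + e) (2*a - 2*b + 8 - e)

theorem abs_potential_sub_le_one (ha : 5 ≤ a) (hb : 5 ≤ b) (hc : 5 ≤ c) {x y : FCSV}
    (hx : FCSvalid a b c x) (hy : FCSvalid a b c y) (h : FCSadj a b c x y) :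
    |potential a b c x - potential a b c y| ≤ 1 := by
  simp only [FCSadj, Prod.mk.injEq] at h
  casesm* _ ∨ _, _ ∧ _, ∃ _, _
  all_goals
    subst_vars
    simp only [FCSvalid] at hx hy
    simp only [potential, abs_eq_max_neg]
    (try split_ifs) <;> omega

theorem potential_le_of_adj (ha : 5 ≤ a) (hb : 5 ≤ b) (hc : 5 ≤ c) {u v : FCSVert a b c}
    (h : (FCS a b c).Adj u v) : potential a b c v.1 ≤ potential a b c u.1 + 1 := by
  rcases (adj_iff.mp h).2 with h | h
  · linarith [(abs_le.mp (abs_potential_sub_le_one ha hb hc u.2 v.2 h)).1]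
  · linarith [(abs_le.mp (abs_potential_sub_le_one ha hb hc v.2 u.2 h)).2]

def geodesicLabel (a c i : ℕ) : FCSV :=
  if i ≤ 3 then .p1 (i + 1)
  else if i ≤ 2*a - 2 then .s1 (i - 1)
  else if i ≤ 2*a + 2*c - 5 then .t1 (i + 2 - 2*a)
  else .u1 (min (i + 5 - 2*a - 2*c) 2)

theorem geodesicLabel_eq_t1 (ha : 3 ≤ a) {d : ℕ} (hd1 : 1 ≤ d) (hd2 : d ≤ 2*c - 3) :
    geodesicLabel a c (2*a - 2 + d) = .t1 d := by
  unfold geodesicLabel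
  split_ifs <;> first | omega | (congr 1; omega)

theorem geodesicLabel_eq_u1_one (ha : 3 ≤ a) (hc : 2 ≤ c) :
    geodesicLabel a c (2*a + 2*c - 4) = .u1 1 := by
  unfold geodesicLabel
  split_ifs <;> first | omega | (congr 1; omega)

theorem geodesicLabel_valid (ha : 3 ≤ a) (hb : 3 ≤ b) (hc : 2 ≤ c) (i : ℕ) :
    FCSvalid a b c (geodesicLabel a c i) := by
  unfold geodesicLabel
  split_ifs <;> simp only [FCSvalid] <;> omega

def geodesic (ha : 3 ≤ a) (hb : 3 ≤ b) (hc : 2 ≤ c) (i : ℕ) : FCSVert a b c :=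
  ⟨geodesicLabel a c i, geodesicLabel_valid ha hb hc i⟩

theorem geodesic_adj (ha : 3 ≤ a) (hb : 3 ≤ b) (hc : 2 ≤ c) {i : ℕ} (hi : i < 2*a + 2*c - 3) :
    (FCS a b c).Adj (geodesic ha hb hc i) (geodesic ha hb hc (i + 1)) := by
  rw [adj_iff]
  simp only [geodesic, geodesicLabel]
  split_ifs <;> (try omega) <;> simp [FCSadj] <;> first | omega | exact ⟨2, by omega⟩

theorem potential_geodesicLabel {i : ℕ} (hi : i ≤ 2*a + 2*c - 3) :
    potential a b c (geodesicLabel a c i) = i := by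
  unfold geodesicLabel
  split_ifs <;> simp only [potential, abs_eq_max_neg] <;> omega

theorem dist_eq_of_val_eq_geodesicLabel (ha : 5 ≤ a) (hb : 5 ≤ b) (hc : 5 ≤ c) {i : ℕ}
    (hi : i ≤ 2*a + 2*c - 4) {x y : FCSVert a b c} (hx : x.1 = geodesicLabel a c i)
    (hy : y.1 = .u1 2 ∨ y.1 = .r1 2) : (FCS a b c).dist x y = 2*a + 2*c - 3 - i := by
  let g := geodesic (b := b) (show 3 ≤ a by omega) (show 3 ≤ b by omega) (show 2 ≤ c by omega)
  have hlast : (FCS a b c).Adj (g (2*a + 2*c - 4)) y := by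
    rw [adj_iff, show (g _).1 = .u1 1 from geodesicLabel_eq_u1_one (by omega) (by omega)]
    rcases hy with hy | hy <;> rw [hy] <;> simp [FCSadj] <;> omega
  have hpy : potential a b c y.1 = 2*a + 2*c - 3 := by
    rcases hy with hy | hy <;> rw [hy] <;> simp [potential] <;> omega
  refine SimpleGraph.dist_eq_of_edist_le_of_le_sub (f := fun v => potential a b c v.1)
    (fun _ _ h => potential_le_of_adj ha hb hc h) ?_ ?_
  · calc (FCS a b c).edist x y
        ≤ (FCS a b c).edist x (g (2*a + 2*c - 4)) + (FCS a b c).edist (g (2*a + 2*c - 4)) y :=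
          SimpleGraph.edist_triangle
      _ ≤ (2*a + 2*c - 4 - i : ℕ) + 1 := by
          gcongr
          · rw [show x = g i from Subtype.ext hx]
            exact SimpleGraph.edist_le_of_adj_succ g hi fun k _ hk => geodesic_adj _ _ _ (by omega)
          · exact (SimpleGraph.edist_eq_one_iff_adj.mpr hlast).le
      _ = (2*a + 2*c - 3 - i : ℕ) := by norm_cast; omega
  · simp only [hx, hpy, potential_geodesicLabel (show i ≤ 2*a + 2*c - 3 by omega)]
    omega

end FCS

/-- for a, b, c ≥ 5 and `1 ≤ d ≤ 2c-3`, the vertices `u_{1,2}` and `r_{1,2}`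
are at equal distance from both `p_{1,1}` and `t_{1,d}`; consequently `{p_{1,1}, t_{1,d}}`
is not a metric generator for `FCS_{a,b,c}`. -/
theorem statement_18 (a b c : ℕ) (ha : 5 ≤ a) (hb : 5 ≤ b) (hc : 5 ≤ c)
    (d : ℕ) (hd1 : 1 ≤ d) (hd2 : d ≤ 2*c-3) :
    ((FCS a b c).dist ⟨FCSV.u1 2, by constructor <;> omega⟩
        ⟨FCSV.p1 1, by constructor <;> omega⟩ =
      (FCS a b c).dist ⟨FCSV.r1 2, by constructor <;> omega⟩
        ⟨FCSV.p1 1, by constructor <;> omega⟩) ∧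
    ((FCS a b c).dist ⟨FCSV.u1 2, by constructor <;> omega⟩
        ⟨FCSV.t1 d, by constructor <;> omega⟩ =
      (FCS a b c).dist ⟨FCSV.r1 2, by constructor <;> omega⟩
        ⟨FCSV.t1 d, by constructor <;> omega⟩) ∧
    ¬ IsResolving (FCS a b c)
      {⟨FCSV.p1 1, by constructor <;> omega⟩, ⟨FCSV.t1 d, by constructor <;> omega⟩} := by
  let u : FCSVert a b c := ⟨.u1 2, by constructor <;> omega⟩
  let r : FCSVert a b c := ⟨.r1 2, by constructor <;> omega⟩
  have key : ∀ (i : ℕ) (x : FCSVert a b c), i ≤ 2*a + 2*c - 4 → x.1 = FCS.geodesicLabel a c i →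
      (FCS a b c).dist u x = (FCS a b c).dist r x := fun i x hi hx => by
    rw [SimpleGraph.dist_comm, FCS.dist_eq_of_val_eq_geodesicLabel ha hb hc hi hx (.inl rfl),
      SimpleGraph.dist_comm, FCS.dist_eq_of_val_eq_geodesicLabel ha hb hc hi hx (.inr rfl)]
  have hp := key 0 ⟨.p1 1, by constructor <;> omega⟩ (by omega) (by simp [FCS.geodesicLabel])
  have ht := key (2*a - 2 + d) ⟨.t1 d, by constructor <;> omega⟩ (by omega)
    (FCS.geodesicLabel_eq_t1 (by omega) hd1 hd2).symm
  refine ⟨hp, ht, not_isResolving_of_forall_dist_eq (x := u) (y := r)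
    (fun h => FCSV.noConfusion (congrArg Subtype.val h)) ?_⟩
  rintro w (rfl | rfl)
  exacts [hp, ht]
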